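/- The matrix representation D of d/dx via trigonometric interpolation at distinct points x_0, ..., x_{2n} ∈ [0, L) has entries D_{mj} = (ψ_m/ψ_j)·(π/L)·(1/sin(π(x_m − x_j)/L)) for m ≠ j, and D_{jj} = (π/L) ∑_{k≠j} cot(π(x_j − x_k)/L), where ψ_m = ∏_{k≠m} sin(π(x_m − x_k)/L). That is, t_j'(x_m) equals these values. -/

import Mathlib

open Real Finset

/-! At a node `x_m` with `m ≠ j`, the factor `sin (π (y - x_m) / L)` of the numerator of `t_j`
vanishes, so the product rule leaves the single term in which that factor is differentiated; at
`x_j` no factor vanishes and the product rule becomes a logarithmic derivative, a sum of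
cotangents. Nodes in `[0, L)` differ by less than `L` in absolute value, which keeps the
sines of all node differences away from zero. -/

theorem sin_pi_mul_sub_div_ne_zero {L a b : ℝ} (ha : a ∈ Set.Ico 0 L) (hb : b ∈ Set.Ico 0 L)
    (hab : a ≠ b) : sin (π * (a - b) / L) ≠ 0 := by
  obtain ⟨ha0, haL⟩ := ha
  obtain ⟨hb0, hbL⟩ := hb
  have hL : 0 < L := by linarith
  have hlt : |π * (a - b) / L| < π := by
    rw [abs_div, abs_mul, abs_of_pos pi_pos, abs_of_pos hL, div_lt_iff₀ hL]
    exact mul_lt_mul_of_pos_left (abs_sub_lt_iff.2 ⟨by linarith, by linarith⟩) pi_pos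
  rw [Ne, sin_eq_zero_iff_of_lt_of_lt (neg_lt_of_abs_lt hlt) (lt_of_abs_lt hlt)]
  exact div_ne_zero (mul_ne_zero pi_ne_zero (sub_ne_zero.2 hab)) hL.ne'

theorem hasDerivAt_sin_mul_sub_div (c a L y : ℝ) :
    HasDerivAt (fun y => sin (c * (y - a) / L)) (cos (c * (y - a) / L) * (c / L)) y := by
  have hlin : HasDerivAt (fun y => c * (y - a) / L) (c / L) y := by
    simpa using (((hasDerivAt_id y).sub_const a).const_mul c).div_const L
  exact (hasDerivAt_sin _).comp y hlin

section ProductRule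

variable {ι 𝕜 : Type*} [DecidableEq ι] [NontriviallyNormedField 𝕜] {s : Finset ι}
  {f : ι → 𝕜 → 𝕜} {f' : ι → 𝕜} {y : 𝕜}

theorem hasDerivAt_finsetProd_of_eq_zero (hf : ∀ i ∈ s, HasDerivAt (f i) (f' i) y) {m : ι}
    (hm : m ∈ s) (hfm : f m y = 0) :
    HasDerivAt (∏ i ∈ s, f i ·) ((∏ i ∈ s.erase m, f i y) * f' m) y := by
  refine (HasDerivAt.fun_finsetProd hf).congr_deriv ?_
  rw [sum_eq_single_of_mem m hm fun i _ him => ?_, smul_eq_mul]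
  rw [prod_eq_zero (mem_erase.2 ⟨Ne.symm him, hm⟩) hfm, zero_smul]

theorem hasDerivAt_finsetProd_of_ne_zero (hf : ∀ i ∈ s, HasDerivAt (f i) (f' i) y)
    (hne : ∀ i ∈ s, f i y ≠ 0) :
    HasDerivAt (∏ i ∈ s, f i ·) ((∏ i ∈ s, f i y) * ∑ i ∈ s, f' i / f i y) y := by
  refine (HasDerivAt.fun_finsetProd hf).congr_deriv ?_
  rw [mul_sum]
  refine sum_congr rfl fun i hi => ?_
  rw [← mul_prod_erase s (f · y) hi, smul_eq_mul]
  field_simp [hne i hi]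

end ProductRule

theorem derivative_matrix_entries_general (L : ℝ) (n : ℕ)
    (x : Fin (2 * n + 1) → ℝ)
    (hmem : ∀ i, x i ∈ Set.Ico (0 : ℝ) L) (hinj : Function.Injective x)
    (ψ : Fin (2 * n + 1) → ℝ)
    (hψ : ∀ m, ψ m = ∏ k ∈ Finset.univ.erase m, Real.sin (π * (x m - x k) / L))
    (t : Fin (2 * n + 1) → ℝ → ℝ)
    (ht : ∀ j y, t j y =
      (∏ k ∈ Finset.univ.erase j, Real.sin (π * (y - x k) / L)) / ψ j) :
    (∀ m j, m ≠ j → deriv (t j) (x m) =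
      (ψ m / ψ j) * (π / L) * (1 / Real.sin (π * (x m - x j) / L))) ∧
    (∀ j, deriv (t j) (x j) =
      (π / L) * ∑ k ∈ Finset.univ.erase j,
        Real.cos (π * (x j - x k) / L) / Real.sin (π * (x j - x k) / L)) := by
  have hsin : ∀ i k, i ≠ k → sin (π * (x i - x k) / L) ≠ 0 := fun i k hik =>
    sin_pi_mul_sub_div_ne_zero (hmem i) (hmem k) (hinj.ne hik)
  have hfactor : ∀ k y, HasDerivAt (fun y => sin (π * (y - x k) / L))
      (cos (π * (y - x k) / L) * (π / L)) y := fun k y => hasDerivAt_sin_mul_sub_div π (x k) L y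
  have ht' : ∀ j, t j = fun y => (∏ k ∈ univ.erase j, sin (π * (y - x k) / L)) / ψ j :=
    fun j => funext (ht j)
  constructor
  · intro m j hmj
    have hm : m ∈ univ.erase j := mem_erase.2 ⟨hmj, mem_univ m⟩
    have hj : j ∈ univ.erase m := mem_erase.2 ⟨hmj.symm, mem_univ j⟩
    rw [ht' j, ((hasDerivAt_finsetProd_of_eq_zero (fun k _ => hfactor k (x m)) hm
      (by simp)).div_const (ψ j)).deriv, hψ m, ← mul_prod_erase _ _ hj, erase_right_comm]
    field_simp [hsin m j hmj]
    simp
  · intro j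
    have hne : ∀ k ∈ univ.erase j, sin (π * (x j - x k) / L) ≠ 0 := fun k hk =>
      hsin j k (ne_of_mem_erase hk).symm
    have hψj : ψ j ≠ 0 := hψ j ▸ prod_ne_zero_iff.2 hne
    rw [ht' j, ((hasDerivAt_finsetProd_of_ne_zero (fun k _ => hfactor k (x j)) hne).div_const
      (ψ j)).deriv, ← hψ j, mul_div_cancel_left₀ _ hψj, mul_sum]
    exact sum_congr rfl fun k _ => by ring

/-- Entries of the matrix `D` representing `d/dx` via trigonometric interpolation:
`D_{mj} = t_j'(x_m)` is given by `(ψ_m/ψ_j)(π/L)/sin(π(x_m−x_j)/L)` for `m ≠ j` and by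
`(π/L) ∑_{k≠j} cot(π(x_j−x_k)/L)` for `m = j`. -/
theorem derivative_matrix_entries (L : ℝ) (hL : 0 < L) (n : ℕ)
    (x : Fin (2 * n + 1) → ℝ)
    (hmem : ∀ i, x i ∈ Set.Ico (0 : ℝ) L) (hinj : Function.Injective x)
    (ψ : Fin (2 * n + 1) → ℝ)
    (hψ : ∀ m, ψ m = ∏ k ∈ Finset.univ.erase m, Real.sin (π * (x m - x k) / L))
    (t : Fin (2 * n + 1) → ℝ → ℝ)
    (ht : ∀ j y, t j y =
      (∏ k ∈ Finset.univ.erase j, Real.sin (π * (y - x k) / L)) / ψ j) :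
    (∀ m j, m ≠ j → deriv (t j) (x m) =
      (ψ m / ψ j) * (π / L) * (1 / Real.sin (π * (x m - x j) / L))) ∧
    (∀ j, deriv (t j) (x j) =
      (π / L) * ∑ k ∈ Finset.univ.erase j,
        Real.cos (π * (x j - x k) / L) / Real.sin (π * (x j - x k) / L)) :=
  derivative_matrix_entries_general L n x hmem hinj ψ hψ t ht
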